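/- arXiv:2508.15974 — 5 statements merged into one kernel-verified Lean document; each statement's English description precedes it below -/
import Mathlib

section
/- Let h ∈ K̄[z] be nonzero with two part-p-th-power decompositions h = q^p + ρ = q₁^p + ρ₁, where v is the Gauss valuation, 0 ≤ v(ρ) − v(h) < p·v(p)/(p−1), and v(ρ₁) > v(ρ). Then v(q₁ − q) = v(ρ)/p, i.e. v((q₁ − q)^p) = v(ρ). -/
/-!
Extend `w` to a valuation with values in `ℚ ∪ {⊤}` and then to the Gauss valuation on `K[X]`,
which is multiplicative by Gauss's lemma (compare the coefficients of `f * g` at the sum of the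
first indices where the minima for `f` and `g` are attained).

Put `d = q₁ - q`. Then `(q + d)^p - q^p = ρ - ρ₁` has valuation `v(ρ)`, since `v(ρ₁) > v(ρ)`.
In `(q + d)^p - q^p = d^p + ∑_{0<k<p} C(p,k) q^k d^(p-k)` every middle term is divisible by `p`,
and `v(q) ≥ v(h)/p > v(ρ)/p - v(p)/(p-1)`; together these make every middle term strictly larger
than `p · min(v(d), v(ρ)/p)`. So if `v(d) < v(ρ)/p` the valuation of the whole sum is `p v(d)`,
and if `v(d) > v(ρ)/p` it exceeds `v(ρ)`: both contradict `v(ρ - ρ₁) = v(ρ)`.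
-/

open Polynomial
open scoped Classical

/-- An additive ℚ-valued valuation on a field `K`, recorded as a bare function with
the valuation axioms imposed only at nonzero elements (the value at `0` is junk). -/
structure AddVal (K : Type*) [Field K] where
  v : K → ℚ
  map_one : v 1 = 0
  map_mul : ∀ x y : K, x ≠ 0 → y ≠ 0 → v (x * y) = v x + v y
  add_ge : ∀ x y : K, x ≠ 0 → y ≠ 0 → x + y ≠ 0 → min (v x) (v y) ≤ v (x + y)

variable {K : Type*} [Field K]

/-- The Gauss valuation of a polynomial: the minimum of the valuations of its
(nonzero) coefficients, with junk value `0` at the zero polynomial. -/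
noncomputable def AddVal.gauss (w : AddVal K) (h : K[X]) : ℚ :=
  if hh : h = 0 then 0
  else h.support.inf' (Polynomial.support_nonempty.mpr hh) fun i => w.v (h.coeff i)

/-- Gauss valuation valued in `ℚ ∪ {∞}`, taking the value `⊤` at the zero polynomial. -/
noncomputable def AddVal.gaussT (w : AddVal K) (h : K[X]) : WithTop ℚ :=
  if h = 0 then ⊤ else (w.gauss h : WithTop ℚ)

/-- The quantity `t = v(ρ) - v(h) ∈ ℚ ∪ {∞}` attached to a
part-`p`-th-power decomposition `h = q^p + ρ` (it is `⊤` when `ρ = 0`). -/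
noncomputable def AddVal.tdiff (w : AddVal K) (h ρ : K[X]) : WithTop ℚ :=
  if ρ = 0 then ⊤ else ((w.gauss ρ - w.gauss h : ℚ) : WithTop ℚ)

/-- `h = q ^ p + ρ` is a part-`p`-th-power decomposition (`deg q ≤ ⌊deg h / p⌋`). -/
def IsPartDecomp (p : ℕ) (h q ρ : K[X]) : Prop :=
  h = q ^ p + ρ ∧ q.natDegree ≤ h.natDegree / p

/-- The threshold `p·v(p)/(p-1)`. -/
noncomputable def pBound (w : AddVal K) (p : ℕ) : ℚ :=
  (p : ℚ) * w.v (p : K) / ((p : ℚ) - 1)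

/-- A part-`p`-th-power decomposition is good if `t ≥ p·v(p)/(p-1)` or if no
decomposition achieves a strictly larger value of `t = v(ρ) - v(h)`. -/
def IsGoodDecomp (w : AddVal K) (p : ℕ) (h q ρ : K[X]) : Prop :=
  IsPartDecomp p h q ρ ∧
    (((pBound w p : ℚ) : WithTop ℚ) ≤ w.tdiff h ρ ∨
      ∀ q₁ ρ₁ : K[X], IsPartDecomp p h q₁ ρ₁ → w.tdiff h ρ₁ ≤ w.tdiff h ρ)

theorem WithTop.coe_div_le_of_le_nsmul {Γ : Type*} [Field Γ] [LinearOrder Γ]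
    [IsStrictOrderedRing Γ] {n : ℕ} (hn : 0 < n) {x : Γ} {y : WithTop Γ}
    (h : (x : WithTop Γ) ≤ n • y) : ((x / n : Γ) : WithTop Γ) ≤ y := by
  induction y using WithTop.recTopCoe with
  | top => exact le_top
  | coe y =>
    rw [← WithTop.coe_nsmul, WithTop.coe_le_coe, nsmul_eq_mul] at h
    rw [WithTop.coe_le_coe, div_le_iff₀ (by exact_mod_cast hn)]
    linarith [mul_comm (n : Γ) y]

namespace AddValuation

section Ring

variable {R : Type*} [Ring R] {Γ₀ : Type*} [LinearOrderedAddCommMonoidWithTop Γ₀]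
  (V : AddValuation R Γ₀)

theorem map_natCast_nonneg (n : ℕ) : 0 ≤ V n := by
  induction n with
  | zero => simp
  | succ n ih =>
    push_cast
    exact le_trans (le_min ih V.map_one.ge) (V.map_add _ _)

theorem map_natCast_le_map_choose {p k : ℕ} (hp : p.Prime) (hk0 : 0 < k) (hkp : k < p) :
    V p ≤ V (p.choose k) := by
  obtain ⟨m, hm⟩ := hp.dvd_choose_self hk0.ne' hkp
  rw [hm, Nat.cast_mul, map_mul]
  exact le_add_of_nonneg_right (V.map_natCast_nonneg m)

end Ring

section GaussValuation

variable {R : Type*} [Ring R] {Γ : Type*} [AddCommGroup Γ] [LinearOrder Γ] [IsOrderedAddMonoid Γ]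
  (V : AddValuation R (WithTop Γ))

def gaussFun (f : R[X]) : WithTop Γ :=
  f.support.inf fun i => V (f.coeff i)

variable {V}

theorem le_gaussFun_iff {f : R[X]} {g : WithTop Γ} : g ≤ V.gaussFun f ↔ ∀ i, g ≤ V (f.coeff i) := by
  refine Finset.le_inf_iff.trans ⟨fun H i => ?_, fun H i _ => H i⟩
  by_cases hi : f.coeff i = 0
  · simp [hi]
  · exact H i (mem_support_iff.mpr hi)

theorem gaussFun_le_coeff (f : R[X]) (i : ℕ) : V.gaussFun f ≤ V (f.coeff i) :=
  le_gaussFun_iff.mp le_rfl i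

theorem exists_coeff_eq_gaussFun {f : R[X]} (hf : V.gaussFun f ≠ ⊤) :
    ∃ i, V (f.coeff i) = V.gaussFun f := by
  have hne : f.support.Nonempty :=
    Finset.nonempty_iff_ne_empty.mpr fun h => hf (by simp [gaussFun, h])
  obtain ⟨i, -, hi⟩ := Finset.exists_mem_eq_inf _ hne fun i => V (f.coeff i)
  exact ⟨i, hi.symm⟩

theorem gaussFun_add_le_mul (f g : R[X]) : V.gaussFun f + V.gaussFun g ≤ V.gaussFun (f * g) := by
  refine le_gaussFun_iff.mpr fun n => ?_
  rw [coeff_mul]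
  refine map_le_sum V fun x _ => ?_
  rw [map_mul]
  exact add_le_add (gaussFun_le_coeff f x.1) (gaussFun_le_coeff g x.2)

open Finset in
theorem gaussFun_mul_le_add (f g : R[X]) : V.gaussFun (f * g) ≤ V.gaussFun f + V.gaussFun g := by
  by_cases htop : V.gaussFun f = ⊤ ∨ V.gaussFun g = ⊤
  · rcases htop with h | h <;> simp [h]
  push Not at htop
  obtain ⟨hf, hg⟩ := htop
  have exf := exists_coeff_eq_gaussFun hf
  have exg := exists_coeff_eq_gaussFun hg
  set i₀ := Nat.find exf
  set j₀ := Nat.find exg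
  have lt_of_lt_i₀ : ∀ i < i₀, V.gaussFun f < V (f.coeff i) := fun i hi =>
    (gaussFun_le_coeff f i).lt_of_ne' (Nat.find_min exf hi)
  have lt_of_lt_j₀ : ∀ j < j₀, V.gaussFun g < V (g.coeff j) := fun j hj =>
    (gaussFun_le_coeff g j).lt_of_ne' (Nat.find_min exg hj)
  have hrest : ∀ x ∈ (antidiagonal (i₀ + j₀)).erase (i₀, j₀),
      V (f.coeff i₀ * g.coeff j₀) < V (f.coeff x.1 * g.coeff x.2) := by
    rintro ⟨i, j⟩ hx
    obtain ⟨hne, hij⟩ := mem_erase.mp hx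
    rw [HasAntidiagonal.mem_antidiagonal] at hij
    rw [map_mul, map_mul, Nat.find_spec exf, Nat.find_spec exg]
    rcases lt_or_ge i i₀ with hi | hi
    · exact WithTop.add_lt_add_of_lt_of_le hg (lt_of_lt_i₀ i hi) (gaussFun_le_coeff g j)
    · have hj : j < j₀ := by
        by_contra hj
        exact hne (Prod.ext (by omega) (by omega))
      exact WithTop.add_lt_add_of_le_of_lt hf (gaussFun_le_coeff f i) (lt_of_lt_j₀ j hj)
  have hval : V (f.coeff i₀ * g.coeff j₀) = V.gaussFun f + V.gaussFun g := by
    rw [map_mul, Nat.find_spec exf, Nat.find_spec exg]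
  calc V.gaussFun (f * g) ≤ V ((f * g).coeff (i₀ + j₀)) := gaussFun_le_coeff _ _
    _ = V (f.coeff i₀ * g.coeff j₀) := by
      rw [coeff_mul, ← add_sum_erase _ _ (HasAntidiagonal.mem_antidiagonal.mpr rfl : (i₀, j₀) ∈ _)]
      refine map_add_eq_of_lt_left V (map_lt_sum V ?_ hrest)
      rw [hval]
      exact WithTop.add_ne_top.mpr ⟨hf, hg⟩
    _ = V.gaussFun f + V.gaussFun g := hval

variable (V)

noncomputable def gauss : AddValuation R[X] (WithTop Γ) :=
  AddValuation.of V.gaussFun (by simp [gaussFun])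
    (le_antisymm (by simpa using gaussFun_le_coeff (V := V) 1 0)
      (le_gaussFun_iff.mpr fun i => by rw [coeff_one]; split_ifs <;> simp))
    (fun f g => le_gaussFun_iff.mpr fun i => by
      rw [coeff_add]
      exact le_trans (min_le_min (gaussFun_le_coeff f i) (gaussFun_le_coeff g i)) (V.map_add _ _))
    (fun f g => le_antisymm (gaussFun_mul_le_add f g) (gaussFun_add_le_mul f g))

theorem gauss_apply (f : R[X]) : V.gauss f = f.support.inf fun i => V (f.coeff i) := rfl

theorem gauss_C (c : R) : V.gauss (C c) = V c := by
  by_cases hc : c = 0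
  · simp [hc]
  · simp [gauss_apply, support_C hc]

end GaussValuation

section BinomialTail

variable {R : Type*} [CommRing R] {Γ : Type*} [Field Γ] [LinearOrder Γ] [IsStrictOrderedRing Γ]
  (V : AddValuation R (WithTop Γ)) {p : ℕ} {vp : Γ}

theorem lt_map_add_pow_sub_pow_sub_pow (hp : p.Prime) (hvp : (vp : WithTop Γ) ≤ V p)
    (hvp0 : 0 ≤ vp) {m b : Γ} {q d : R} (hq : (b : WithTop Γ) ≤ V q)
    (hd : (m : WithTop Γ) ≤ V d) (hbm : m - vp / (p - 1) < b) :
    ((p * m : Γ) : WithTop Γ) < V ((q + d) ^ p - q ^ p - d ^ p) := by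
  have hp1 : (1 : Γ) < p := by exact_mod_cast hp.one_lt
  have hexpand : (q + d) ^ p - q ^ p - d ^ p =
      ∑ k ∈ (Finset.range p).erase 0, q ^ k * d ^ (p - k) * p.choose k := by
    rw [add_pow, Finset.sum_range_succ, ← Finset.add_sum_erase _ _ (Finset.mem_range.mpr hp.pos)]
    simp
  rw [hexpand]
  refine map_lt_sum V WithTop.coe_ne_top fun k hk => ?_
  obtain ⟨hk0, hkp⟩ : 0 < k ∧ k < p := ⟨Nat.pos_of_ne_zero (Finset.ne_of_mem_erase hk),
    Finset.mem_range.mp (Finset.mem_of_mem_erase hk)⟩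
  have hk1 : (1 : Γ) ≤ k := by exact_mod_cast hk0
  have hkp1 : (k : Γ) ≤ p - 1 := by
    have : ((k + 1 : ℕ) : Γ) ≤ p := by exact_mod_cast hkp
    push_cast at this
    linarith
  have hgain : (p * m : Γ) < k * b + (p - k) * m + vp := by
    have h1 : k * (m - vp / (p - 1)) < k * b := by gcongr
    have h2 : k * (vp / (p - 1)) ≤ vp := by
      rw [mul_div_assoc', div_le_iff₀ (by linarith)]
      nlinarith
    nlinarith
  calc ((p * m : Γ) : WithTop Γ) < ((k * b + (p - k) * m + vp : Γ) : WithTop Γ) :=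
        WithTop.coe_lt_coe.mpr hgain
    _ = k • (b : WithTop Γ) + (p - k) • (m : WithTop Γ) + vp := by
      rw [← WithTop.coe_nsmul, ← WithTop.coe_nsmul, nsmul_eq_mul, nsmul_eq_mul,
        Nat.cast_sub hkp.le]
      rfl
    _ ≤ k • V q + (p - k) • V d + V p := by gcongr
    _ ≤ V (q ^ k * d ^ (p - k) * p.choose k) := by
      rw [map_mul, map_mul, map_pow, map_pow]
      gcongr
      exact V.map_natCast_le_map_choose hp hk0 hkp

theorem mul_eq_of_map_add_pow_sub_pow (hp : p.Prime) (hvp : (vp : WithTop Γ) ≤ V p)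
    (hvp0 : 0 ≤ vp) {a B C : Γ} {q d : R} (hq : (B : WithTop Γ) ≤ p • V q)
    (hd : V d = a) (hS : V ((q + d) ^ p - q ^ p) = C) (hBC : C - B < p * vp / (p - 1)) :
    p * a = C := by
  have hp0 : (0 : Γ) < p := by exact_mod_cast hp.pos
  obtain ⟨c, rfl⟩ : ∃ c, C = p * c := ⟨C / p, (mul_div_cancel₀ C hp0.ne').symm⟩
  have hq' := WithTop.coe_div_le_of_le_nsmul hp.pos hq
  have hbc : c - B / p < vp / (p - 1) := by
    rw [← mul_div_cancel_left₀ c hp0.ne', ← sub_div, div_lt_iff₀ hp0]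
    linarith [show p * vp / (p - 1) = vp / (p - 1) * p by ring]
  have htail := V.lt_map_add_pow_sub_pow_sub_pow hp hvp hvp0 hq' (hd ▸ WithTop.coe_le_coe.mpr
    (min_le_left a c)) (by linarith [min_le_right a c] : min a c - vp / (p - 1) < B / p)
  have hsplit : (q + d) ^ p - q ^ p = d ^ p + ((q + d) ^ p - q ^ p - d ^ p) := by ring
  have hdp : V (d ^ p) = ((p * a : Γ) : WithTop Γ) := by
    rw [map_pow, hd, ← WithTop.coe_nsmul, nsmul_eq_mul]
  rcases lt_trichotomy a c with hac | hac | hac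
  · rw [min_eq_left hac.le] at htail
    rw [hsplit, map_add_eq_of_lt_left V (hdp ▸ htail), hdp] at hS
    exact WithTop.coe_injective hS
  · rw [hac]
  · rw [min_eq_right hac.le] at htail
    have hlt : ((p * c : Γ) : WithTop Γ) < V (d ^ p) :=
      hdp ▸ WithTop.coe_lt_coe.mpr (mul_lt_mul_of_pos_left hac hp0)
    have := (lt_min hlt htail).trans_le (V.map_add _ _)
    rw [← hsplit, hS] at this
    exact absurd this (lt_irrefl _)

end BinomialTail

end AddValuation

namespace AddVal

variable (w : AddVal K)

noncomputable def toAddValuation : AddValuation K (WithTop ℚ) :=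
  AddValuation.of (fun x => if x = 0 then ⊤ else (w.v x : WithTop ℚ)) (if_pos rfl)
    (by simp [w.map_one])
    (fun x y => by
      by_cases hx : x = 0
      · simp [hx]
      by_cases hy : y = 0
      · simp [hy]
      by_cases hxy : x + y = 0
      · simp [hxy]
      simp only [if_neg hx, if_neg hy, if_neg hxy]
      exact_mod_cast w.add_ge x y hx hy hxy)
    (fun x y => by
      by_cases hx : x = 0
      · simp [hx]
      by_cases hy : y = 0
      · simp [hy]
      simp only [if_neg hx, if_neg hy, if_neg (mul_ne_zero hx hy)]
      exact_mod_cast w.map_mul x y hx hy)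

theorem toAddValuation_of_ne_zero {x : K} (hx : x ≠ 0) :
    w.toAddValuation x = w.v x :=
  if_neg hx

theorem coe_v_le_toAddValuation (x : K) :
    (w.v x : WithTop ℚ) ≤ w.toAddValuation x := by
  by_cases hx : x = 0
  · simp [hx]
  · rw [w.toAddValuation_of_ne_zero hx]

theorem gaussT_eq_gauss (f : K[X]) : w.gaussT f = w.toAddValuation.gauss f := by
  by_cases hf : f = 0
  · simp [gaussT, hf]
  rw [gaussT, if_neg hf, gauss, dif_neg hf, Finset.coe_inf', AddValuation.gauss_apply]
  exact Finset.inf_congr rfl fun i hi => (w.toAddValuation_of_ne_zero (mem_support_iff.mp hi)).symm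

theorem coe_gauss {f : K[X]} (hf : f ≠ 0) : (w.gauss f : WithTop ℚ) = w.toAddValuation.gauss f := by
  rw [← gaussT_eq_gauss, gaussT, if_neg hf]

theorem coe_gauss_le (f : K[X]) : (w.gauss f : WithTop ℚ) ≤ w.toAddValuation.gauss f := by
  by_cases hf : f = 0
  · simp [hf]
  · exact (w.coe_gauss hf).le

theorem gauss_pow {f : K[X]} (hf : f ≠ 0) (n : ℕ) : w.gauss (f ^ n) = n * w.gauss f := by
  refine WithTop.coe_injective ?_
  rw [w.coe_gauss (pow_ne_zero n hf), AddValuation.map_pow, ← w.coe_gauss hf, ← WithTop.coe_nsmul,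
    nsmul_eq_mul]

theorem coe_v_natCast_le_gauss (n : ℕ) : (w.v n : WithTop ℚ) ≤ w.toAddValuation.gauss n := by
  rw [← map_natCast C n, AddValuation.gauss_C]
  exact w.coe_v_le_toAddValuation n

theorem v_natCast_pos_of_pBound_pos {p : ℕ} (hp : 1 < p) (h : 0 < pBound w p) : 0 < w.v p := by
  have hp1 : (0 : ℚ) < p - 1 := by linarith [(by exact_mod_cast hp : (1 : ℚ) < p)]
  rw [pBound, div_pos_iff_of_pos_right hp1] at h
  exact pos_of_mul_pos_right h (Nat.cast_nonneg p)

theorem coe_gauss_le_nsmul_gauss {p : ℕ} {h q ρ : K[X]} (hd : IsPartDecomp p h q ρ) (hρ : ρ ≠ 0)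
    (hhρ : w.gauss h ≤ w.gauss ρ) : (w.gauss h : WithTop ℚ) ≤ p • w.toAddValuation.gauss q := by
  rw [← AddValuation.map_pow, show q ^ p = h - ρ by linear_combination -hd.1]
  refine le_trans (le_min (w.coe_gauss_le h) ?_) (AddValuation.map_sub _ h ρ)
  rwa [← w.coe_gauss hρ, WithTop.coe_le_coe]

variable {w}

theorem ne_zero_of_tdiff_lt {h ρ ρ₁ : K[X]} (H : w.tdiff h ρ < w.tdiff h ρ₁) : ρ ≠ 0 := by
  rintro rfl
  simp [tdiff] at H

theorem gauss_sub_of_tdiff_lt {h ρ ρ₁ : K[X]} (H : w.tdiff h ρ < w.tdiff h ρ₁) :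
    w.toAddValuation.gauss (ρ - ρ₁) = w.gauss ρ := by
  have hρ := ne_zero_of_tdiff_lt H
  rw [w.coe_gauss hρ]
  refine AddValuation.map_sub_eq_of_lt_left _ ?_
  rw [← gaussT_eq_gauss, ← gaussT_eq_gauss]
  unfold tdiff at H
  unfold gaussT
  by_cases hρ₁ : ρ₁ = 0
  · simp [hρ, hρ₁]
  simp only [if_neg hρ, if_neg hρ₁, WithTop.coe_lt_coe] at H ⊢
  linarith


end AddVal

theorem IsPartDecomp.pow_sub_pow {p : ℕ} {h q ρ q₁ ρ₁ : K[X]} (hd : IsPartDecomp p h q ρ)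
    (hd₁ : IsPartDecomp p h q₁ ρ₁) : q₁ ^ p - q ^ p = ρ - ρ₁ := by
  linear_combination hd.1 - hd₁.1

theorem statement2_general {K : Type*} [Field K] (w : AddVal K) (p : ℕ) (hp : p.Prime)
    (h q ρ q₁ ρ₁ : K[X])
    (hd : IsPartDecomp p h q ρ) (hd₁ : IsPartDecomp p h q₁ ρ₁)
    (ht0 : 0 ≤ w.gauss ρ - w.gauss h)
    (ht1 : w.gauss ρ - w.gauss h < pBound w p)
    (hρ₁ : w.tdiff h ρ < w.tdiff h ρ₁) :
    w.gauss (q₁ - q) = w.gauss ρ / (p : ℚ) ∧ w.gauss ((q₁ - q) ^ p) = w.gauss ρ := by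
  have hρ := AddVal.ne_zero_of_tdiff_lt hρ₁
  have hdiff := hd.pow_sub_pow hd₁
  have hq₁q : q₁ - q ≠ 0 := by
    intro h0
    rw [sub_eq_zero.mp h0, sub_self, eq_comm, sub_eq_zero] at hdiff
    exact hρ₁.ne (by rw [hdiff])
  have hS : w.toAddValuation.gauss ((q + (q₁ - q)) ^ p - q ^ p) = w.gauss ρ := by
    rw [add_sub_cancel, hdiff]
    exact AddVal.gauss_sub_of_tdiff_lt hρ₁
  have key : p * w.gauss (q₁ - q) = w.gauss ρ :=
    w.toAddValuation.gauss.mul_eq_of_map_add_pow_sub_pow hp (w.coe_v_natCast_le_gauss p)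
      (w.v_natCast_pos_of_pBound_pos hp.one_lt (ht0.trans_lt ht1)).le
      (w.coe_gauss_le_nsmul_gauss hd hρ (by linarith)) (w.coe_gauss hq₁q).symm hS ht1
  have hp0 : (p : ℚ) ≠ 0 := by exact_mod_cast hp.ne_zero
  exact ⟨by rw [← key, mul_div_cancel_left₀ _ hp0], by rw [w.gauss_pow hq₁q, key]⟩

/-- given two part-`p`-th-power decompositions `h = q^p + ρ = q₁^p + ρ₁`
with `0 ≤ v(ρ) - v(h) < p·v(p)/(p-1)` and `v(ρ₁) > v(ρ)`, one has
`v(q₁ - q) = v(ρ)/p`, i.e. `v((q₁ - q)^p) = v(ρ)`. -/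
theorem statement2 {K : Type*} [Field K] [CharZero K] (w : AddVal K) (p : ℕ) (hp : p.Prime)
    (ζ : K) (hζ : IsPrimitiveRoot ζ p)
    (h q ρ q₁ ρ₁ : K[X]) (hh : h ≠ 0) (hρ : ρ ≠ 0)
    (hd : IsPartDecomp p h q ρ) (hd₁ : IsPartDecomp p h q₁ ρ₁)
    (ht0 : 0 ≤ w.gauss ρ - w.gauss h)
    (ht1 : w.gauss ρ - w.gauss h < pBound w p)
    (hρ₁ : w.tdiff h ρ < w.tdiff h ρ₁) :
    w.gauss (q₁ - q) = w.gauss ρ / (p : ℚ) ∧ w.gauss ((q₁ - q) ^ p) = w.gauss ρ :=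
  statement2_general w p hp h q ρ q₁ ρ₁ hd hd₁ ht0 ht1 hρ₁
end

section
/- Every nonzero polynomial h ∈ K̄[z] over an algebraically closed field K̄ admits a total part-p-th-power decomposition: there exist q, ρ ∈ K̄[z] with deg q ≤ ⌊deg h / p⌋, h = q^p + ρ, and every monomial of ρ having degree not divisible by p. Equivalently, given the coefficients a_0, …, a_m ∈ K̄ of the terms of h of degrees divisible by p (with m = ⌊deg h / p⌋), there exists q ∈ K̄[z] of degree at most m such that for each 0 ≤ i ≤ m the degree-pi coefficient of q^p equals a_i. -/
/-!
Let `Q = ∑_{j ≤ m} Y_j z^j` be the generic polynomial of degree `≤ m` and `F_i ∈ K[Y]` the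
coefficient of `z^{p i}` in `Q^p`; we must show that `b ↦ (F_0(b), …, F_m(b))` is onto `K^{m+1}`.
Every monomial `Y^μ` of `F_i` has degree `p` and moment `∑ j μ_j = p i`, so for a strictly
concave weight on the variables, `Y_i^p` is the unique monomial of top weight in `F_i`.
Rewriting `Y_i^p` as `F_i` minus lower terms therefore reduces every monomial to one with all
exponents `< p`, and `K[Y]` is a finite module over `K[F]`. Comparing transcendence degrees, the
`F_i` are algebraically independent, and lying over for the integral extension `K[F] ⊆ K[Y]`,
together with the Nullstellensatz, gives a point `b` with `F_i(b) = a_i`.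
-/

open Polynomial

theorem Finsupp.eq_single_of_degree_eq {σ : Type*} {μ : σ →₀ ℕ} {i : σ} {p : ℕ}
    (hμ : ∀ j ≠ i, μ j = 0) (hdeg : μ.degree = p) : μ = single i p := by
  have hμi : μ = single i (μ i) := by
    ext j
    rcases eq_or_ne j i with rfl | hj
    · simp
    · simp [hμ j hj, hj.symm]
  rw [hμi, degree_single] at hdeg
  rw [hμi, hdeg]

namespace MvPolynomial

open Algebra Finsupp

noncomputable def reducedMonomials (σ R : Type*) [CommSemiring R] [Finite σ] (p : ℕ) :
    Set (MvPolynomial σ R) :=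
  Set.range fun e : σ → Fin p => monomial (equivFunOnFinite.symm fun j => (e j : ℕ)) 1

section LeadingPowers

variable {R σ : Type*} [CommRing R] {w : σ → ℕ}

theorem weight_lt_of_mem_support_mul_monomial {G : MvPolynomial σ R} {d : ℕ}
    (hG : ∀ ν ∈ G.support, weight w ν < d) (μ : σ →₀ ℕ) (c : R) :
    ∀ ν ∈ (G * monomial μ c).support, weight w ν < d + weight w μ := by
  classical
  intro ν hν
  obtain ⟨ν₁, hν₁, ν₂, hν₂, rfl⟩ := Finset.mem_add.1 (support_mul _ _ hν)
  rw [Finset.mem_singleton.1 (support_monomial_subset hν₂), map_add]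
  exact Nat.add_lt_add_right (hG ν₁ hν₁) _

variable [Finite σ] {p : ℕ} {F : σ → MvPolynomial σ R}

theorem monomial_mem_span_adjoin (hw : ∀ i, 0 < w i) (hp : 0 < p)
    (hF : ∀ i, ∀ ν ∈ (F i - X i ^ p).support, weight w ν < p * w i) (μ : σ →₀ ℕ) (c : R) :
    monomial μ c ∈ Submodule.span (adjoin R (Set.range F)) (reducedMonomials σ R p) := by
  set M := Submodule.span (adjoin R (Set.range F)) (reducedMonomials σ R p)
  induction hN : weight w μ using Nat.strong_induction_on generalizing μ c with
  | _ N ih =>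
  by_cases hsmall : ∀ j, μ j < p
  · have hgen : monomial μ (1 : R) ∈ M := Submodule.subset_span
      ⟨fun j => ⟨μ j, hsmall j⟩, by simp⟩
    simpa [smul_monomial] using Submodule.smul_of_tower_mem M c hgen
  obtain ⟨i, hi⟩ := not_forall.1 hsmall
  obtain ⟨μ', rfl⟩ : ∃ μ', μ = single i p + μ' := ⟨μ - single i p, by
    ext j; rcases eq_or_ne i j with rfl | hj <;> simp [*]; omega⟩
  have hN' : N = p * w i + weight w μ' := by simp [← hN, weight_single]
  have hlower : ∀ ν, weight w ν < p * w i + weight w μ' → ∀ c, monomial ν c ∈ M :=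
    fun ν hν c => ih _ (hN' ▸ hν) ν c rfl
  have hsplit : monomial (single i p + μ') c
      = F i * monomial μ' c - (F i - X i ^ p) * monomial μ' c := by
    rw [sub_mul, sub_sub_cancel, X_pow_eq_monomial, monomial_mul, one_mul]
  rw [hsplit, as_sum ((F i - X i ^ p) * monomial μ' c)]
  refine sub_mem ?_ (Submodule.sum_mem _ fun ν hν => hlower ν
    (weight_lt_of_mem_support_mul_monomial (hF i) μ' c ν hν) _)
  exact Submodule.smul_mem M (⟨F i, subset_adjoin ⟨i, rfl⟩⟩ : adjoin R (Set.range F))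
    (hlower μ' (Nat.lt_add_of_pos_left (Nat.mul_pos hp (hw i))) c)

theorem finite_adjoin_of_weight_sub_X_pow_lt (hw : ∀ i, 0 < w i) (hp : 0 < p)
    (hF : ∀ i, ∀ ν ∈ (F i - X i ^ p).support, weight w ν < p * w i) :
    Module.Finite (adjoin R (Set.range F)) (MvPolynomial σ R) :=
  ⟨Submodule.fg_def.2 ⟨_, Set.finite_range _, eq_top_iff.2 fun g _ =>
    g.as_sum ▸ Submodule.sum_mem _ fun ν _ => monomial_mem_span_adjoin hw hp hF ν _⟩⟩

end LeadingPowers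

theorem algebraicIndependent_of_finite_adjoin {K σ : Type*} [Field K] [Finite σ]
    (f : σ → MvPolynomial σ K) [Module.Finite (adjoin K (Set.range f)) (MvPolynomial σ K)] :
    AlgebraicIndependent K f :=
  (Algebra.IsAlgebraic.isTranscendenceBasis_of_lift_le_trdeg_of_finite K f
    (by simp)).1

theorem exists_eval_eq_of_finite_adjoin {K σ : Type*} [Field K] [IsAlgClosed K] [Finite σ]
    (f : σ → MvPolynomial σ K) [Module.Finite (adjoin K (Set.range f)) (MvPolynomial σ K)]
    (a : σ → K) : ∃ b : σ → K, ∀ i, eval b (f i) = a i := by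
  set A := adjoin K (Set.range f)
  have hf := algebraicIndependent_of_finite_adjoin f
  let ψ : A →ₐ[K] K := (aeval a).comp (hf.aevalEquiv.symm : A →ₐ[K] MvPolynomial σ K)
  have hψ : ∀ i, ψ (hf.aevalEquiv (X i)) = a i := fun i => by simp [ψ]
  have : (RingHom.ker ψ).IsMaximal :=
    RingHom.ker_isMaximal_of_surjective _ fun c => ⟨algebraMap K A c, ψ.commutes c⟩
  obtain ⟨Q, hQ, hQψ⟩ := Ideal.exists_maximal_ideal_liesOver_of_isIntegral
    (S := MvPolynomial σ K) (RingHom.ker ψ)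
  obtain ⟨b, rfl⟩ := isMaximal_iff_eq_vanishingIdeal_singleton.1 hQ
  refine ⟨b, fun i => ?_⟩
  have hker : hf.aevalEquiv (X i) - algebraMap K A (a i) ∈ RingHom.ker ψ := by
    simp [hψ, ψ.commutes]
  rw [Ideal.liesOver_iff] at hQψ
  rw [hQψ, Ideal.mem_comap, mem_vanishingIdeal_singleton_iff] at hker
  simpa [sub_eq_zero] using hker

end MvPolynomial

namespace PartPowerDecomposition

open MvPolynomial Finsupp

variable (R : Type*) [CommRing R] (m p : ℕ)

noncomputable def genericPoly : (MvPolynomial (Fin (m + 1)) R)[X] :=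
  ∑ j : Fin (m + 1), Polynomial.monomial j (X j)

noncomputable def powCoeff (i : Fin (m + 1)) : MvPolynomial (Fin (m + 1)) R :=
  ((genericPoly R m) ^ p).coeff (p * i)

def concaveWeight (j : Fin (m + 1)) : ℕ := (m + 1) ^ 2 - (j : ℕ) ^ 2

variable {R m p}

theorem map_eval_genericPoly (b : Fin (m + 1) → R) :
    (genericPoly R m).map (eval b) = ∑ j : Fin (m + 1), Polynomial.monomial (j : ℕ) (b j) := by
  simp [genericPoly, Polynomial.map_sum]

theorem eval_powCoeff (b : Fin (m + 1) → R) (i : Fin (m + 1)) :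
    eval b (powCoeff R m p i)
      = ((∑ j : Fin (m + 1), Polynomial.monomial (j : ℕ) (b j)) ^ p).coeff (p * i) := by
  rw [powCoeff, ← Polynomial.coeff_map, Polynomial.map_pow, map_eval_genericPoly]

theorem isWeightedHomogeneous_coeff_genericPoly (a : ℕ) :
    IsWeightedHomogeneous (fun j : Fin (m + 1) => ((1 : ℕ), (j : ℕ)))
      ((genericPoly R m).coeff a) (1, a) := by
  rw [genericPoly, finsetSum_coeff]
  refine IsWeightedHomogeneous.sum _ _ _ fun j _ => ?_
  rw [Polynomial.coeff_monomial]
  split_ifs with h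
  · exact h ▸ isWeightedHomogeneous_X R _ j
  · exact isWeightedHomogeneous_zero R _ _

theorem isWeightedHomogeneous_coeff_genericPoly_pow (k t : ℕ) :
    IsWeightedHomogeneous (fun j : Fin (m + 1) => ((1 : ℕ), (j : ℕ)))
      (((genericPoly R m) ^ k).coeff t) (k, t) := by
  induction k generalizing t with
  | zero =>
    rw [pow_zero, Polynomial.coeff_one]
    split_ifs with h
    · subst h; exact isWeightedHomogeneous_one R _
    · exact isWeightedHomogeneous_zero R _ _
  | succ k ih =>
    rw [pow_succ', Polynomial.coeff_mul]
    refine IsWeightedHomogeneous.sum _ _ _ fun x hx => ?_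
    convert (isWeightedHomogeneous_coeff_genericPoly x.1).mul (ih x.2) using 1
    rw [Finset.HasAntidiagonal.mem_antidiagonal] at hx
    simp [hx, add_comm]

theorem degree_eq_and_weight_eq_of_mem_support_powCoeff {i : Fin (m + 1)} {μ : Fin (m + 1) →₀ ℕ}
    (hμ : μ ∈ (powCoeff R m p i).support) :
    μ.degree = p ∧ weight (fun j : Fin (m + 1) => (j : ℕ)) μ = p * i := by
  have := isWeightedHomogeneous_coeff_genericPoly_pow (R := R) (m := m) p (p * i)
    (MvPolynomial.mem_support_iff.1 hμ)
  rw [weight_apply, Prod.ext_iff] at this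
  simp only [Finsupp.sum, Prod.fst_sum, Prod.snd_sum, Prod.smul_mk, smul_eq_mul] at this
  rw [Finsupp.degree_apply, weight_apply, Finsupp.sum]
  simpa using this

theorem concaveWeight_pos (j : Fin (m + 1)) : 0 < concaveWeight m j :=
  Nat.sub_pos_of_lt (Nat.pow_lt_pow_left j.isLt two_ne_zero)

theorem weight_concaveWeight_lt {i : Fin (m + 1)} {μ : Fin (m + 1) →₀ ℕ}
    (hdeg : μ.degree = p) (hmom : weight (fun j : Fin (m + 1) => (j : ℕ)) μ = p * i)
    (hne : μ ≠ single i p) : weight (concaveWeight m) μ < p * concaveWeight m i := by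
  have hsum : ∀ v : Fin (m + 1) → ℕ, (weight v μ : ℤ) = ∑ j, (μ j : ℤ) * v j := fun v => by
    simp [weight_apply, Finsupp.sum_fintype]
  have hw : ∀ j : Fin (m + 1), (concaveWeight m j : ℤ) = (m + 1) ^ 2 - ((j : ℕ) : ℤ) ^ 2 :=
    fun j => by
      have : (j : ℕ) ^ 2 ≤ (m + 1) ^ 2 := Nat.pow_le_pow_left j.isLt.le 2
      simp [concaveWeight, this]
  have hdeg' : ∑ j, (μ j : ℤ) = p := by exact_mod_cast (degree_eq_sum μ).symm.trans hdeg
  have hmom' : ∑ j, (μ j : ℤ) * ((j : ℕ) : ℤ) = p * i := by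
    rw [← hsum]; exact_mod_cast hmom
  -- the weight defect `p * w i - weight w μ` is the variance `∑ μ_j (j - i)²` of `μ` about `i`
  have hvar : ∑ j, (μ j : ℤ) * (((j : ℕ) : ℤ) - i) ^ 2
      = concaveWeight m i * ∑ j, (μ j : ℤ) - ∑ j, (μ j : ℤ) * concaveWeight m j
        - 2 * i * (∑ j, (μ j : ℤ) * ((j : ℕ) : ℤ) - i * ∑ j, (μ j : ℤ)) := by
    simp only [Finset.mul_sum, ← Finset.sum_sub_distrib]
    refine Finset.sum_congr rfl fun j _ => ?_
    rw [hw, hw]; ring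
  by_contra hle
  have hzero : ∑ j, (μ j : ℤ) * (((j : ℕ) : ℤ) - i) ^ 2 = 0 := by
    refine le_antisymm ?_ (Finset.sum_nonneg fun j _ => by positivity)
    rw [hvar, hdeg', hmom', ← hsum]
    have : (p * concaveWeight m i : ℤ) ≤ weight (concaveWeight m) μ := by
      exact_mod_cast not_lt.1 hle
    linarith
  have hsupp : ∀ j ≠ i, μ j = 0 := fun j hj => by
    have := (Finset.sum_eq_zero_iff_of_nonneg (fun j _ => by positivity)).1 hzero j
      (Finset.mem_univ j)
    simpa [sub_eq_zero, Fin.val_inj, hj] using this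
  exact hne (eq_single_of_degree_eq hsupp hdeg)

theorem coeff_single_powCoeff (i : Fin (m + 1)) : coeff (single i p) (powCoeff R m p i) = 1 := by
  classical
  have heval : eval (Pi.single i 1) (powCoeff R m p i) = 1 := by
    rw [eval_powCoeff, Fintype.sum_eq_single i fun j hj => by simp [hj]]
    simp [Polynomial.monomial_pow, mul_comm]
  rw [← heval, eval_eq', Finset.sum_eq_single (single i p)]
  · simp [Finsupp.single_apply, Pi.single_apply]
  · intro μ hμ hne
    obtain ⟨j, hji, hj⟩ : ∃ j ≠ i, μ j ≠ 0 := by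
      by_contra! hzero
      exact hne (eq_single_of_degree_eq hzero
        (degree_eq_and_weight_eq_of_mem_support_powCoeff hμ).1)
    rw [Finset.prod_eq_zero (Finset.mem_univ j) (by simp [hji, hj]), mul_zero]
  · intro h
    rw [MvPolynomial.notMem_support_iff.1 h, zero_mul]

theorem weight_lt_of_mem_support_powCoeff_sub_X_pow (i : Fin (m + 1)) :
    ∀ ν ∈ (powCoeff R m p i - X i ^ p).support,
      weight (concaveWeight m) ν < p * concaveWeight m i := by
  intro ν hν
  rw [MvPolynomial.mem_support_iff, coeff_sub, MvPolynomial.X_pow_eq_monomial,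
    MvPolynomial.coeff_monomial] at hν
  rcases eq_or_ne ν (single i p) with rfl | hne
  · simp [coeff_single_powCoeff] at hν
  · rw [if_neg hne.symm, sub_zero] at hν
    obtain ⟨hdeg, hmom⟩ :=
      degree_eq_and_weight_eq_of_mem_support_powCoeff (MvPolynomial.mem_support_iff.2 hν)
    exact weight_concaveWeight_lt hdeg hmom hne

theorem finite_adjoin_powCoeff (hp : 0 < p) :
    Module.Finite (Algebra.adjoin R (Set.range (powCoeff R m p)))
      (MvPolynomial (Fin (m + 1)) R) :=
  finite_adjoin_of_weight_sub_X_pow_lt concaveWeight_pos hp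
    weight_lt_of_mem_support_powCoeff_sub_X_pow

theorem exists_natDegree_le_coeff_pow_eq {K : Type*} [Field K] [IsAlgClosed K] (hp : 0 < p)
    (a : Fin (m + 1) → K) :
    ∃ q : K[X], q.natDegree ≤ m ∧ ∀ i : Fin (m + 1), (q ^ p).coeff (p * i) = a i := by
  have := finite_adjoin_powCoeff (R := K) (m := m) hp
  obtain ⟨b, hb⟩ := exists_eval_eq_of_finite_adjoin (powCoeff K m p) a
  refine ⟨∑ j : Fin (m + 1), Polynomial.monomial (j : ℕ) (b j),
    natDegree_sum_le_of_forall_le _ _ fun j _ =>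
      (natDegree_monomial_le _).trans (Nat.lt_succ_iff.1 j.isLt), fun i => ?_⟩
  rw [← eval_powCoeff, hb]

end PartPowerDecomposition

open PartPowerDecomposition

theorem statement5_general {K : Type*} [Field K] [IsAlgClosed K] (p : ℕ) (hp : p.Prime)
    (h : K[X]) :
    ∃ q ρ : K[X], h = q ^ p + ρ ∧ q.natDegree ≤ h.natDegree / p ∧
      ∀ i : ℕ, p ∣ i → ρ.coeff i = 0 := by
  set m := h.natDegree / p
  obtain ⟨q, hq, hcoeff⟩ :=
    exists_natDegree_le_coeff_pow_eq hp.pos fun i : Fin (m + 1) => h.coeff (p * i)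
  refine ⟨q, h - q ^ p, by ring, hq, ?_⟩
  rintro _ ⟨c, rfl⟩
  rw [coeff_sub, sub_eq_zero]
  rcases le_or_gt c m with hc | hc
  · exact (hcoeff ⟨c, Nat.lt_succ_of_le hc⟩).symm
  have hdeg : h.natDegree < p * c := by
    rw [mul_comm]; exact (Nat.div_lt_iff_lt_mul hp.pos).1 hc
  have hqp : (q ^ p).natDegree < p * c :=
    natDegree_pow_le.trans_lt (Nat.mul_lt_mul_of_pos_left (hq.trans_lt hc) hp.pos)
  rw [coeff_eq_zero_of_natDegree_lt hdeg, coeff_eq_zero_of_natDegree_lt hqp]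

/-- Proposition 4.9: every nonzero polynomial over an algebraically closed
field admits a total part-`p`-th-power decomposition `h = q^p + ρ` with
`deg q ≤ ⌊deg h / p⌋` and every monomial of `ρ` of degree not divisible by `p`. -/
theorem statement5 {K : Type*} [Field K] [IsAlgClosed K] (p : ℕ) (hp : p.Prime)
    (h : K[X]) (hh : h ≠ 0) :
    ∃ q ρ : K[X], h = q ^ p + ρ ∧ q.natDegree ≤ h.natDegree / p ∧
      ∀ i : ℕ, p ∣ i → ρ.coeff i = 0 :=
  statement5_general p hp h
end

section
/- Fix a polynomial h ∈ K̄[z], a center α ∈ K̄, b ∈ ℚ, and β ∈ K̄^× with v(β) = b. Then the left (resp. right) derivative at b of the piecewise linear function c ↦ v̲_h(c) (the Gauss valuation of h(β'x' + α) for v(β') = c) equals the highest (resp. lowest) degree appearing among the terms of a normalized reduction of h_{α,β}(x') = h(βx' + α). -/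
/-!
After the substitution `x' ↦ (β'/β) x'`, the `i`-th coefficient of `h(β'x' + α)` is that of
`h_{α,β}` times `(β'/β)^i`, so `v̲_h(c) = min_i (v(a_i) + i (c - b))` is a minimum of finitely many
affine functions of `c`. For `c` close to `b`, indices whose coefficient does not attain the Gauss
valuation at `b` stay strictly above the minimum, and among those that do, the one with the smallest
`i (c - b)` wins: the largest index for `c < b`, the smallest for `c > b`.
-/

open Polynomial
open scoped Classical

variable {K : Type*} [Field K]

open Filter Topology

theorem Finset.eventually_inf'_add_mul_eq {ι 𝕜 : Type*} [Field 𝕜] [LinearOrder 𝕜]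
    [IsStrictOrderedRing 𝕜] [TopologicalSpace 𝕜] [OrderTopology 𝕜]
    (s : Finset ι) (hs : s.Nonempty) (f a : ι → 𝕜) :
    ∀ᶠ δ in 𝓝 0, ∀ m ∈ s, f m = s.inf' hs f →
      (∀ j ∈ s, f j = s.inf' hs f → a m * δ ≤ a j * δ) →
        s.inf' hs (fun i => f i + a i * δ) = s.inf' hs f + a m * δ := by
  have hgap : ∀ᶠ δ in 𝓝 (0 : 𝕜), ∀ j ∈ s, ∀ m ∈ s, s.inf' hs f < f j →
      s.inf' hs f + a m * δ < f j + a j * δ := by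
    refine (eventually_all_finset s).2 fun j _ => (eventually_all_finset s).2 fun m _ => ?_
    by_cases hj : s.inf' hs f < f j
    · refine (ContinuousAt.eventually_lt (by fun_prop) (by fun_prop) ?_).mono fun _ hδ _ => hδ
      simpa using hj
    · exact Eventually.of_forall fun _ hj' => absurd hj' hj
  filter_upwards [hgap] with δ hδ m hm hfm hmin
  refine le_antisymm ((Finset.inf'_le _ hm).trans_eq (by rw [hfm]))
    (Finset.le_inf' _ _ fun j hj => ?_)
  rcases (Finset.inf'_le f hj).eq_or_lt with hfj | hfj
  · rw [hfj]
    exact add_le_add_right (hmin j hj hfj.symm) _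
  · exact (hδ j hj m hm hfj).le

namespace Polynomial

theorem comp_C_mul_X_add_C_ne_zero {p : K[X]} (hp : p ≠ 0) {a b : K} (ha : a ≠ 0) :
    p.comp (C a * X + C b) ≠ 0 := by
  rw [Ne, comp_eq_zero_iff, not_or]
  refine ⟨hp, fun ⟨_, hq⟩ => ?_⟩
  have hdeg := congrArg natDegree hq
  rw [natDegree_C, natDegree_linear ha] at hdeg
  exact one_ne_zero hdeg

theorem comp_C_mul_X_add_C_eq_comp (p : K[X]) {β : K} (hβ : β ≠ 0) (β' α : K) :
    p.comp (C β' * X + C α) = (p.comp (C β * X + C α)).comp (C (β' / β) * X) := by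
  rw [comp_assoc, add_comp, mul_comp, C_comp, C_comp, X_comp, ← mul_assoc, ← C_mul,
    mul_div_cancel₀ _ hβ]

end Polynomial

namespace AddVal

variable (w : AddVal K)

theorem v_pow {t : K} (ht : t ≠ 0) : ∀ n : ℕ, w.v (t ^ n) = n * w.v t
  | 0 => by simpa using w.map_one
  | n + 1 => by
    rw [pow_succ, w.map_mul _ _ (pow_ne_zero n ht) ht, v_pow ht n]
    push_cast
    ring

theorem v_div {a b : K} (ha : a ≠ 0) (hb : b ≠ 0) : w.v (a / b) = w.v a - w.v b := by
  have h := w.map_mul _ _ (div_ne_zero ha hb) hb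
  rw [div_mul_cancel₀ _ hb] at h
  linarith

theorem gauss_of_ne_zero {g : K[X]} (hg : g ≠ 0) :
    w.gauss g = g.support.inf' (support_nonempty.2 hg) fun i => w.v (g.coeff i) :=
  dif_neg hg

theorem gauss_comp_C_mul_X {g : K[X]} (hg : g ≠ 0) {t : K} (ht : t ≠ 0) :
    w.gauss (g.comp (C t * X)) =
      g.support.inf' (support_nonempty.2 hg) fun i => w.v (g.coeff i) + i * w.v t := by
  have hsupp : (g.comp (C t * X)).support = g.support := by
    ext n
    simp [ht]
  have hne : g.comp (C t * X) ≠ 0 := by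
    rw [← support_nonempty, hsupp]
    exact support_nonempty.2 hg
  rw [w.gauss_of_ne_zero hne]
  refine Finset.inf'_congr _ hsupp fun i hi => ?_
  rw [comp_C_mul_X_coeff, w.map_mul _ _ (mem_support_iff.1 (hsupp ▸ hi)) (pow_ne_zero _ ht),
    w.v_pow ht]

end AddVal

/-- Lemma 4.13(b): the left (resp. right) derivative at `b = v(β)` of the
piecewise linear function `c ↦ v̲_h(c)` equals the highest (resp. lowest) degree
appearing in a normalized reduction of `h_{α,β}` — i.e. the greatest (resp. least) index
whose coefficient attains the Gauss valuation. This is expressed by local linearity with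
those slopes on a punctured left/right neighbourhood of `b`. -/
theorem statement9 {K : Type*} [Field K] (w : AddVal K) (h : K[X]) (hh : h ≠ 0)
    (α β : K) (hβ : β ≠ 0) :
    ∃ ε : ℚ, 0 < ε ∧ ∀ β' : K, β' ≠ 0 →
      ((w.v β - ε < w.v β' → w.v β' ≤ w.v β →
        w.gauss (h.comp (C β' * X + C α)) =
          w.gauss (h.comp (C β * X + C α)) +
            ((sSup {i : ℕ | (h.comp (C β * X + C α)).coeff i ≠ 0 ∧
                w.v ((h.comp (C β * X + C α)).coeff i)
                  = w.gauss (h.comp (C β * X + C α))} : ℕ) : ℚ) * (w.v β' - w.v β)) ∧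
       (w.v β ≤ w.v β' → w.v β' < w.v β + ε →
        w.gauss (h.comp (C β' * X + C α)) =
          w.gauss (h.comp (C β * X + C α)) +
            ((sInf {i : ℕ | (h.comp (C β * X + C α)).coeff i ≠ 0 ∧
                w.v ((h.comp (C β * X + C α)).coeff i)
                  = w.gauss (h.comp (C β * X + C α))} : ℕ) : ℚ) * (w.v β' - w.v β))) := by
  set g := h.comp (C β * X + C α)
  have hg : g ≠ 0 := comp_C_mul_X_add_C_ne_zero hh hβ
  have hs : g.support.Nonempty := support_nonempty.2 hg
  have hG := w.gauss_of_ne_zero hg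
  set S : Set ℕ := {i | g.coeff i ≠ 0 ∧ w.v (g.coeff i) = w.gauss g}
  have hS : S.Nonempty := by
    obtain ⟨i, hi, hival⟩ := g.support.exists_mem_eq_inf' hs fun i => w.v (g.coeff i)
    exact ⟨i, mem_support_iff.1 hi, by rw [hG, hival]⟩
  have hSbdd : BddAbove S := ⟨g.natDegree, fun i hi => le_natDegree_of_ne_zero hi.1⟩
  obtain ⟨ε, hε, hlin⟩ := (nhds_basis_abs_sub_lt (0 : ℚ)).eventually_iff.1
    (g.support.eventually_inf'_add_mul_eq hs (fun i => w.v (g.coeff i)) fun i => (i : ℚ))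
  have hslope : ∀ β' : K, β' ≠ 0 → |w.v β' - w.v β| < ε → ∀ m ∈ S,
      (∀ j ∈ S, (m : ℚ) * (w.v β' - w.v β) ≤ j * (w.v β' - w.v β)) →
      w.gauss (h.comp (C β' * X + C α)) = w.gauss g + m * (w.v β' - w.v β) := by
    intro β' hβ' hclose m hm hmin
    rw [comp_C_mul_X_add_C_eq_comp h hβ, w.gauss_comp_C_mul_X hg (div_ne_zero hβ' hβ),
      w.v_div hβ' hβ, hG]
    exact hlin (by simpa using hclose) m (mem_support_iff.2 hm.1) (hm.2.trans hG)
      fun j hj hfj => hmin j ⟨mem_support_iff.1 hj, hfj.trans hG.symm⟩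
  refine ⟨ε, hε, fun β' hβ' => ⟨fun hlo hle => ?_, fun hge hhi => ?_⟩⟩
  · exact hslope β' hβ' (abs_lt.2 ⟨by linarith, by linarith⟩) _ (Nat.sSup_mem hS hSbdd)
      fun j hj => mul_le_mul_of_nonpos_right (Nat.cast_le.2 (le_csSup hSbdd hj)) (by linarith)
  · exact hslope β' hβ' (abs_lt.2 ⟨by linarith, by linarith⟩) _ (Nat.sInf_mem hS)
      fun j hj => mul_le_mul_of_nonneg_right (Nat.cast_le.2 (Nat.sInf_le hj)) (by linarith)
end

section
/- Let h ∈ K̄[z] be nonzero and suppose h = q₁^p + ρ₁ = q₂^p + ρ₂ are two good part-p-th-power decompositions. Then min{v(ρ₁) − v(h), p·v(p)/(p−1)} = min{v(ρ₂) − v(h), p·v(p)/(p−1)}, where v is the Gauss valuation. Consequently the truncated quantity t_h := min{v(ρ) − v(h), p·v(p)/(p−1)} is independent of the choice of good decomposition. -/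
open Polynomial
open scoped Classical

variable {K : Type*} [Field K]

/-- Remark 4.4(c): any two good part-`p`-th-power decompositions of the
same nonzero polynomial have the same truncated quantity
`min{v(ρ) - v(h), p·v(p)/(p-1)}`. -/
theorem statement15 {K : Type*} [Field K] (w : AddVal K) (p : ℕ) (hp : p.Prime)
    (h q₁ ρ₁ q₂ ρ₂ : K[X]) (hh : h ≠ 0)
    (hg₁ : IsGoodDecomp w p h q₁ ρ₁) (hg₂ : IsGoodDecomp w p h q₂ ρ₂) :
    min (w.tdiff h ρ₁) ((pBound w p : ℚ) : WithTop ℚ)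
      = min (w.tdiff h ρ₂) ((pBound w p : ℚ) : WithTop ℚ) := by
  obtain ⟨hd₁, hc₁⟩ := hg₁
  obtain ⟨hd₂, hc₂⟩ := hg₂
  rcases hc₁ with h1 | h1 <;> rcases hc₂ with h2 | h2
  · rw [min_eq_right h1, min_eq_right h2]
  · have := h2 q₁ ρ₁ hd₁
    rw [min_eq_right h1, min_eq_right (le_trans h1 this)]
  · have := h1 q₂ ρ₂ hd₂
    rw [min_eq_right h2, min_eq_right (le_trans h2 this)]
  · have a := h2 q₁ ρ₁ hd₁
    have b := h1 q₂ ρ₂ hd₂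
    rw [le_antisymm a b]
end

section
/- Let h ∈ K̄[z] and let α, α' ∈ K̄ and β, β' ∈ K̄^× satisfy v(α − α') ≥ v(β) = v(β'). Then the Gauss valuations of h_{α,β}(x') = h(βx' + α) and h_{α',β'}(x') = h(β'x' + α') are equal. -/
open Polynomial
open scoped Classical

variable {K : Type*} [Field K]

lemma AddVal.v_neg (w : AddVal K) {x : K} (hx : x ≠ 0) : w.v (-x) = w.v x := by
  have h1 : w.v ((-1 : K) * (-1)) = w.v (-1) + w.v (-1) :=
    w.map_mul _ _ (by norm_num) (by norm_num)
  rw [neg_mul_neg, one_mul, w.map_one] at h1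
  have : w.v (-1 : K) = 0 := by linarith
  have := w.map_mul (-1) x (by norm_num) hx
  rw [neg_one_mul] at this
  rw [this, ‹w.v (-1:K) = 0›, zero_add]

lemma AddVal.v_pow_s16 (w : AddVal K) {x : K} (hx : x ≠ 0) (n : ℕ) :
    w.v (x ^ n) = n * w.v x := by
  induction n with
  | zero => simpa using w.map_one
  | succ n ih =>
      rw [pow_succ, w.map_mul _ _ (pow_ne_zero _ hx) hx, ih]
      push_cast; ring

lemma AddVal.v_nat (w : AddVal K) (n : ℕ) (hn : (n : K) ≠ 0) : 0 ≤ w.v (n : K) := by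
  induction n with
  | zero => simp at hn
  | succ n ih =>
      by_cases h0 : (n : K) = 0
      · have : ((n+1 : ℕ) : K) = 1 := by push_cast; rw [h0]; ring
        rw [this, w.map_one]
      · have h1 : ((n+1 : ℕ) : K) = (n : K) + 1 := by push_cast; ring
        have := w.add_ge (n : K) 1 h0 one_ne_zero (by rw [← h1]; exact hn)
        rw [w.map_one] at this
        rw [h1]
        have hn0 := ih h0
        exact le_trans (le_min hn0 le_rfl) this

lemma AddVal.v_sum (w : AddVal K) {ι : Type*} (s : Finset ι) (f : ι → K) (c : ℚ)
    (hb : ∀ i ∈ s, f i ≠ 0 → c ≤ w.v (f i)) (hs : (∑ i ∈ s, f i) ≠ 0) :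
    c ≤ w.v (∑ i ∈ s, f i) := by
  induction s using Finset.induction with
  | empty => simp at hs
  | @insert a s ha ih =>
      rw [Finset.sum_insert ha] at hs ⊢
      by_cases hfa : f a = 0
      · rw [hfa, zero_add] at hs ⊢
        exact ih (fun i hi => hb i (Finset.mem_insert_of_mem hi)) hs
      · by_cases hrest : (∑ i ∈ s, f i) = 0
        · rw [hrest, add_zero]
          exact hb a (Finset.mem_insert_self a s) hfa
        · have := w.add_ge (f a) _ hfa hrest hs
          refine le_trans (le_min (hb a (Finset.mem_insert_self a s) hfa)
            (ih (fun i hi => hb i (Finset.mem_insert_of_mem hi)) hrest)) this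

lemma AddVal.gauss_le (w : AddVal K) {p : K[X]} (hp : p ≠ 0) {i : ℕ}
    (hi : p.coeff i ≠ 0) : w.gauss p ≤ w.v (p.coeff i) := by
  rw [AddVal.gauss, dif_neg hp]
  exact Finset.inf'_le _ (mem_support_iff.mpr hi)

lemma AddVal.le_gauss (w : AddVal K) {p : K[X]} (hp : p ≠ 0) {c : ℚ}
    (hc : ∀ i, p.coeff i ≠ 0 → c ≤ w.v (p.coeff i)) : c ≤ w.gauss p := by
  rw [AddVal.gauss, dif_neg hp]
  exact Finset.le_inf' _ _ fun i hi => hc i (mem_support_iff.mp hi)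

lemma taylor_ne_zero' {p : K[X]} (hp : p ≠ 0) (δ : K) : taylor δ p ≠ 0 := fun h =>
  hp (taylor_injective δ (by simpa using h))

lemma AddVal.gauss_taylor_le (w : AddVal K) {p : K[X]} (hp : p ≠ 0) {δ : K}
    (hδ0 : δ ≠ 0) (hδ : 0 ≤ w.v δ) : w.gauss p ≤ w.gauss (taylor δ p) := by
  refine w.le_gauss (taylor_ne_zero' hp δ) fun k hk => ?_
  rw [taylor_coeff, eval_eq_sum_range] at hk ⊢
  refine w.v_sum _ _ _ (fun i _ hne => ?_) hk
  have hcoeff : (hasseDeriv k p).coeff i ≠ 0 := fun h => hne (by rw [h, zero_mul])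
  rw [hasseDeriv_coeff] at hcoeff ⊢
  have hch : ((i + k).choose k : K) ≠ 0 := fun h => hcoeff (by rw [h, zero_mul])
  have hpc : p.coeff (i + k) ≠ 0 := fun h => hcoeff (by rw [h, mul_zero])
  rw [w.map_mul _ _ hcoeff (pow_ne_zero _ hδ0),
    w.map_mul _ _ hch hpc, w.v_pow_s16 hδ0]
  have h1 := w.v_nat _ hch
  have h2 := w.gauss_le hp hpc
  have h3 : 0 ≤ (i : ℚ) * w.v δ := mul_nonneg (by positivity) hδ
  linarith

lemma AddVal.gauss_taylor (w : AddVal K) {p : K[X]} (hp : p ≠ 0) {δ : K}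
    (hδ0 : δ ≠ 0) (hδ : 0 ≤ w.v δ) : w.gauss (taylor δ p) = w.gauss p := by
  refine le_antisymm ?_ (w.gauss_taylor_le hp hδ0 hδ)
  have h1 := w.gauss_taylor_le (taylor_ne_zero' hp δ) (δ := -δ) (neg_ne_zero.mpr hδ0)
    (by rw [w.v_neg hδ0]; exact hδ)
  rwa [taylor_taylor, neg_add_cancel, taylor_zero'] at h1

lemma coeff_comp_C_mul_X (p : K[X]) (β : K) (i : ℕ) :
    (p.comp (C β * X)).coeff i = p.coeff i * β ^ i := by
  rw [comp_eq_sum_left, Polynomial.sum_def, finset_sum_coeff]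
  rw [show p.coeff i * β ^ i = ∑ n ∈ p.support,
      (if i = n then p.coeff n * β ^ n else 0) from ?_]
  · refine Finset.sum_congr rfl fun n _ => ?_
    rw [mul_pow, ← C_pow, ← mul_assoc, ← C_mul, coeff_C_mul_X_pow]
  · rw [Finset.sum_ite_eq p.support i fun n => p.coeff n * β ^ n]
    by_cases hi : i ∈ p.support
    · rw [if_pos hi]
    · rw [if_neg hi, notMem_support_iff.mp hi, zero_mul]

lemma comp_C_mul_X_ne_zero {p : K[X]} (hp : p ≠ 0) {β : K} (hβ : β ≠ 0) :
    p.comp (C β * X) ≠ 0 := by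
  intro h
  have := coeff_comp_C_mul_X p β p.natDegree
  rw [h, coeff_zero] at this
  exact pow_ne_zero _ hβ ((mul_eq_zero.mp this.symm).resolve_left
    (mt leadingCoeff_eq_zero.mp hp)) |>.elim

lemma AddVal.gauss_scale_le (w : AddVal K) {p : K[X]} (hp : p ≠ 0) {β β' : K}
    (hβ : β ≠ 0) (hβ' : β' ≠ 0) (hββ' : w.v β = w.v β') :
    w.gauss (p.comp (C β * X)) ≤ w.gauss (p.comp (C β' * X)) := by
  refine w.le_gauss (comp_C_mul_X_ne_zero hp hβ') fun i hi => ?_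
  rw [coeff_comp_C_mul_X] at hi ⊢
  have hpc : p.coeff i ≠ 0 := fun h => hi (by rw [h, zero_mul])
  have hA : (p.comp (C β * X)).coeff i ≠ 0 := by
    rw [coeff_comp_C_mul_X]; exact mul_ne_zero hpc (pow_ne_zero _ hβ)
  have := w.gauss_le (comp_C_mul_X_ne_zero hp hβ) hA
  rw [coeff_comp_C_mul_X] at this
  rw [w.map_mul _ _ hpc (pow_ne_zero _ hβ'), w.v_pow_s16 hβ']
  rw [w.map_mul _ _ hpc (pow_ne_zero _ hβ), w.v_pow_s16 hβ, hββ'] at this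
  exact this

lemma AddVal.gauss_scale (w : AddVal K) {p : K[X]} (hp : p ≠ 0) {β β' : K}
    (hβ : β ≠ 0) (hβ' : β' ≠ 0) (hββ' : w.v β = w.v β') :
    w.gauss (p.comp (C β * X)) = w.gauss (p.comp (C β' * X)) :=
  le_antisymm (w.gauss_scale_le hp hβ hβ' hββ')
    (w.gauss_scale_le hp hβ' hβ hββ'.symm)


/-- Proposition 5.2(a): if `v(α - α') ≥ v(β) = v(β')` (i.e. the discs
`D_{α,v(β)}` and `D_{α',v(β')}` coincide), then the Gauss valuations of
`h(βx' + α)` and `h(β'x' + α')` are equal. -/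
theorem statement16 {K : Type*} [Field K] (w : AddVal K) (h : K[X]) (hh : h ≠ 0)
    (α α' β β' : K) (hβ : β ≠ 0) (hβ' : β' ≠ 0) (hββ' : w.v β = w.v β')
    (hαα' : α = α' ∨ (α - α' ≠ 0 ∧ w.v β ≤ w.v (α - α'))) :
    w.gauss (h.comp (C β * X + C α)) = w.gauss (h.comp (C β' * X + C α')) := by
  have key : ∀ (γ : K) (b : K), b ≠ 0 →
      h.comp (C b * X + C γ) = (taylor γ h).comp (C b * X) := by
    intro γ b hb
    rw [taylor_apply, comp_assoc]
    congr 1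
    simp [add_comp]
  have hG : taylor α h ≠ 0 := taylor_ne_zero' hh α
  have hG' : taylor α' h ≠ 0 := taylor_ne_zero' hh α'
  rw [key α β hβ, key α' β' hβ']
  rw [w.gauss_scale hG' hβ' hβ hββ'.symm]
  rcases hαα' with rfl | ⟨hne, hge⟩
  · rfl
  · -- (taylor α' h).comp (C β * X) = taylor δ ((taylor α h).comp (C β * X))
    set δ : K := (α' - α) / β with hδdef
    have hδ0 : δ ≠ 0 := div_ne_zero (fun hc => hne (by
      have : α - α' = -(α' - α) := by ring
      rw [this, hc, neg_zero])) hβ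
    have hβδ : β * δ = α' - α := by rw [hδdef]; field_simp
    have hcomp : taylor δ ((taylor α h).comp (C β * X)) =
        (taylor α' h).comp (C β * X) := by
      rw [← key α β hβ, ← key α' β hβ, taylor_apply, comp_assoc]
      congr 1
      simp only [add_comp, mul_comp, C_comp, X_comp]
      rw [mul_add, ← C_mul, hβδ, add_assoc, ← C_add, sub_add_cancel]
    rw [← hcomp]
    have hvδ : 0 ≤ w.v δ := by
      have hargs : w.v (α' - α) = w.v β + w.v δ := by
        rw [← hβδ]; exact w.map_mul _ _ hβ hδ0
      have hvneg : w.v (α' - α) = w.v (α - α') := by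
        have : α' - α = -(α - α') := by ring
        rw [this, w.v_neg hne]
      linarith
    exact (w.gauss_taylor (comp_C_mul_X_ne_zero hG hβ) hδ0 hvδ).symm
end
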